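/- (Donald's formula.) Let ϖ be a positive definite density matrix on ℂ^m ⊗ ℂ^n with reduced density matrices ϖ_A and ϖ_B, and let σ_L be a positive definite density matrix on ℂ^m and σ_R a positive definite density matrix on ℂ^n. Then S(ϖ | σ_L ⊗ σ_R) = I_ϖ(A:B) + S(ϖ_A | σ_L) + S(ϖ_B | σ_R). -/

import Mathlib

/-!
The spectral calculus `hermCalc` does not depend on the eigenbasis chosen by
`eigenvectorUnitary`: any unitary `W` with `diag λ · W = W · diag d` also intertwines
`diag (f ∘ λ)` and `diag (f ∘ d)`. Diagonalising `σL` and `σR` therefore diagonalises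
`σL ⊗ σR`, and `log (ab) = log a + log b` on the eigenvalues gives
`log (σL ⊗ σR) = log σL ⊗ 1 + 1 ⊗ log σR`. Since the partial traces are dual to `X ↦ X ⊗ 1`
and `Y ↦ 1 ⊗ Y` under the trace pairing, both sides of the formula equal
`-S(ϖ) - Tr (ϖ_A log σL) - Tr (ϖ_B log σR)`.
-/

open scoped Kronecker ComplexOrder
open Matrix

noncomputable section

namespace TAL

/-- A density matrix: positive semidefinite with trace `1`. -/
def IsDensityMatrix {k : Type*} [Fintype k] [DecidableEq k] (D : Matrix k k ℂ) : Prop :=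
  D.PosSemidef ∧ D.trace = 1

/-- Functional calculus for Hermitian matrices via the spectral decomposition
(junk value `0` on non-Hermitian matrices). -/
def hermCalc {k : Type*} [Fintype k] [DecidableEq k] (f : ℝ → ℝ) (A : Matrix k k ℂ) :
    Matrix k k ℂ :=
  if hA : A.IsHermitian then
    (hA.eigenvectorUnitary : Matrix k k ℂ) *
      Matrix.diagonal (fun i => (f (hA.eigenvalues i) : ℂ)) *
        star (hA.eigenvectorUnitary : Matrix k k ℂ)
  else 0

/-- Matrix logarithm via the spectral decomposition. -/
def matLog {k : Type*} [Fintype k] [DecidableEq k] (A : Matrix k k ℂ) : Matrix k k ℂ :=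
  hermCalc Real.log A

/-- The von Neumann entropy `S(D) = -Tr (D log D)`, computed through the eigenvalues,
with the convention `0 * log 0 = 0` (junk value `0` on non-Hermitian matrices). -/
def vnEntropy {k : Type*} [Fintype k] [DecidableEq k] (A : Matrix k k ℂ) : ℝ :=
  if hA : A.IsHermitian then ∑ i, Real.negMulLog (hA.eigenvalues i) else 0

/-- The Umegaki relative entropy `S(D | E) = Tr (D (log D - log E))`. -/
def relEntropy {k : Type*} [Fintype k] [DecidableEq k] (D E : Matrix k k ℂ) : ℝ :=
  ((D * (matLog D - matLog E)).trace).re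

/-- Partial trace over the second (right) tensor factor. -/
def ptraceR {k₁ k₂ : Type*} [Fintype k₂] (D : Matrix (k₁ × k₂) (k₁ × k₂) ℂ) :
    Matrix k₁ k₁ ℂ :=
  Matrix.of fun i j => ∑ s : k₂, D (i, s) (j, s)

/-- Partial trace over the first (left) tensor factor. -/
def ptraceL {k₁ k₂ : Type*} [Fintype k₁] (D : Matrix (k₁ × k₂) (k₁ × k₂) ℂ) :
    Matrix k₂ k₂ ℂ :=
  Matrix.of fun i j => ∑ s : k₁, D (s, i) (s, j)

/-- The mutual entropy `I_D(A:B) = S(D_A) + S(D_B) - S(D)`. -/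
def mutualEntropy {k₁ k₂ : Type*} [Fintype k₁] [Fintype k₂] [DecidableEq k₁] [DecidableEq k₂]
    (D : Matrix (k₁ × k₂) (k₁ × k₂) ℂ) : ℝ :=
  vnEntropy (ptraceR D) + vnEntropy (ptraceL D) - vnEntropy D

/-- The Gibbs density matrix `e^{-β H} / Tr(e^{-β H})`. -/
def gibbs {k : Type*} [Fintype k] [DecidableEq k] (β : ℝ) (H : Matrix k k ℂ) :
    Matrix k k ℂ :=
  (NormedSpace.exp ((-(β : ℂ)) • H)).trace⁻¹ • NormedSpace.exp ((-(β : ℂ)) • H)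

/-- The free energy functional `F(D) = Tr(H D) - β⁻¹ S(D)` (real part of the trace). -/
def freeEnergy {k : Type*} [Fintype k] [DecidableEq k] (β : ℝ) (H D : Matrix k k ℂ) : ℝ :=
  ((H * D).trace).re - β⁻¹ * vnEntropy D

/-- The ℓ²-operator norm of a matrix. -/
def opNorm {k : Type*} [Fintype k] [DecidableEq k] (A : Matrix k k ℂ) : ℝ :=
  ‖(Matrix.toEuclideanCLM (𝕜 := ℂ) A : EuclideanSpace ℂ k →L[ℂ] EuclideanSpace ℂ k)‖

/-- The trace norm `‖X‖₁ = Tr ((X* X)^{1/2})`. -/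
def traceNorm {k : Type*} [Fintype k] [DecidableEq k] (X : Matrix k k ℂ) : ℝ :=
  ((((Matrix.posSemidef_conjTranspose_mul_self X).1.eigenvectorUnitary : Matrix k k ℂ) *
    Matrix.diagonal (fun i => ((Real.sqrt ((Matrix.posSemidef_conjTranspose_mul_self X).1.eigenvalues i) : ℝ) : ℂ)) *
      (star (Matrix.posSemidef_conjTranspose_mul_self X).1.eigenvectorUnitary : Matrix k k ℂ)).trace).re


/-- The perturbed density matrix `D^h = e^{log D + h} / Tr(e^{log D + h})`. -/
def pert {k : Type*} [Fintype k] [DecidableEq k] (D h : Matrix k k ℂ) : Matrix k k ℂ :=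
  (NormedSpace.exp (matLog D + h)).trace⁻¹ • NormedSpace.exp (matLog D + h)

section SpectralCalculus

variable {k : Type*} [Fintype k] [DecidableEq k]

lemma hermCalc_of_isHermitian {A : Matrix k k ℂ} (hA : A.IsHermitian) (f : ℝ → ℝ) :
    hermCalc f A = (hA.eigenvectorUnitary : Matrix k k ℂ) *
      diagonal (fun i => (f (hA.eigenvalues i) : ℂ)) *
        star (hA.eigenvectorUnitary : Matrix k k ℂ) := by
  rw [hermCalc, dif_pos hA]

lemma diagonal_comp_mul_eq_of_diagonal_mul_eq {l : Type*} [Fintype l] [DecidableEq l]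
    (f : ℝ → ℝ) (a : k → ℝ) (b : l → ℝ) (W : Matrix k l ℂ)
    (h : diagonal (fun i => (a i : ℂ)) * W = W * diagonal (fun j => (b j : ℂ))) :
    diagonal (fun i => (f (a i) : ℂ)) * W = W * diagonal (fun j => (f (b j) : ℂ)) := by
  ext i j
  have hij : (a i : ℂ) * W i j = W i j * b j := by
    simpa only [diagonal_mul, mul_diagonal] using congrFun₂ h i j
  rw [diagonal_mul, mul_diagonal]
  rcases eq_or_ne (W i j) 0 with hW | hW
  · simp [hW]
  · have hab : a i = b j := by
      exact_mod_cast mul_right_cancel₀ hW (hij.trans (mul_comm _ _))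
    rw [hab, mul_comm]

lemma hermCalc_conj_diagonal (f : ℝ → ℝ) {U : Matrix k k ℂ} (hU : U ∈ unitary (Matrix k k ℂ))
    (d : k → ℝ) :
    hermCalc f (U * diagonal (fun i => (d i : ℂ)) * star U) =
      U * diagonal (fun i => (f (d i) : ℂ)) * star U := by
  have hA : (U * diagonal (fun i => (d i : ℂ)) * star U).IsHermitian :=
    isHermitian_mul_mul_conjTranspose _ <|
      isHermitian_diagonal_iff.mpr fun i => Complex.conj_ofReal (d i)
  set V : Matrix k k ℂ := ↑hA.eigenvectorUnitary
  have hV : V ∈ unitary (Matrix k k ℂ) := hA.eigenvectorUnitary.2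
  have hspec : V * diagonal (fun i => (hA.eigenvalues i : ℂ)) * star V =
      U * diagonal (fun i => (d i : ℂ)) * star U :=
    hA.spectral_theorem.symm
  have hint : diagonal (fun i => (hA.eigenvalues i : ℂ)) * (star V * U) =
      (star V * U) * diagonal (fun i => (d i : ℂ)) := by
    calc _ = star V * (V * diagonal (fun i => (hA.eigenvalues i : ℂ)) * star V) * U := by
          simp only [← mul_assoc, Unitary.star_mul_self_of_mem hV, one_mul]
      _ = star V * (U * diagonal (fun i => (d i : ℂ)) * star U) * U := by rw [hspec]
      _ = _ := by simp only [mul_assoc, Unitary.star_mul_self_of_mem hU, mul_one]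
  rw [hermCalc_of_isHermitian hA]
  calc V * diagonal (fun i => (f (hA.eigenvalues i) : ℂ)) * star V
      = V * (diagonal (fun i => (f (hA.eigenvalues i) : ℂ)) * (star V * U)) * star U := by
        simp only [mul_assoc, Unitary.mul_star_self_of_mem hU, mul_one]
    _ = V * (star V * U * diagonal (fun i => (f (d i) : ℂ))) * star U := by
        rw [diagonal_comp_mul_eq_of_diagonal_mul_eq f _ _ _ hint]
    _ = U * diagonal (fun i => (f (d i) : ℂ)) * star U := by
        simp only [← mul_assoc, Unitary.mul_star_self_of_mem hV, one_mul]

lemma mul_hermCalc_self {D : Matrix k k ℂ} (hD : D.IsHermitian) (f : ℝ → ℝ) :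
    D * hermCalc f D = hermCalc (fun x => x * f x) D := by
  set V : Matrix k k ℂ := ↑hD.eigenvectorUnitary
  have hV : V ∈ unitary (Matrix k k ℂ) := hD.eigenvectorUnitary.2
  have hspec : D = V * diagonal (fun i => (hD.eigenvalues i : ℂ)) * star V :=
    hD.spectral_theorem
  rw [hermCalc_of_isHermitian hD, hermCalc_of_isHermitian hD]
  nth_rw 1 [hspec]
  calc V * diagonal (fun i => (hD.eigenvalues i : ℂ)) * star V *
        (V * diagonal (fun i => (f (hD.eigenvalues i) : ℂ)) * star V)
      = V * (diagonal (fun i => (hD.eigenvalues i : ℂ)) * (star V * V) *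
          diagonal (fun i => (f (hD.eigenvalues i) : ℂ))) * star V := by
        simp only [mul_assoc]
    _ = _ := by
        rw [Unitary.star_mul_self_of_mem hV, mul_one, diagonal_mul_diagonal]
        push_cast
        rfl

lemma trace_hermCalc {D : Matrix k k ℂ} (hD : D.IsHermitian) (f : ℝ → ℝ) :
    (hermCalc f D).trace = ∑ i, (f (hD.eigenvalues i) : ℂ) := by
  rw [hermCalc_of_isHermitian hD, trace_mul_cycle,
    Unitary.star_mul_self_of_mem hD.eigenvectorUnitary.2, one_mul, trace_diagonal]

lemma vnEntropy_eq_neg_re_trace_mul_matLog {D : Matrix k k ℂ} (hD : D.IsHermitian) :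
    vnEntropy D = -((D * matLog D).trace).re := by
  rw [vnEntropy, dif_pos hD, matLog, mul_hermCalc_self hD, trace_hermCalc hD, Complex.re_sum,
    ← Finset.sum_neg_distrib]
  simp only [Complex.ofReal_re, Real.negMulLog, neg_mul]

lemma relEntropy_eq_neg_vnEntropy_sub {D : Matrix k k ℂ} (hD : D.IsHermitian)
    (E : Matrix k k ℂ) : relEntropy D E = -vnEntropy D - ((D * matLog E).trace).re := by
  rw [relEntropy, vnEntropy_eq_neg_re_trace_mul_matLog hD, mul_sub, trace_sub, Complex.sub_re,
    neg_neg]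

end SpectralCalculus

section TensorProduct

variable {k₁ k₂ : Type*}

lemma matLog_kronecker [Fintype k₁] [Fintype k₂] [DecidableEq k₁] [DecidableEq k₂]
    {P : Matrix k₁ k₁ ℂ} {Q : Matrix k₂ k₂ ℂ} (hP : P.PosDef) (hQ : Q.PosDef) :
    matLog (P ⊗ₖ Q) =
      matLog P ⊗ₖ (1 : Matrix k₂ k₂ ℂ) + (1 : Matrix k₁ k₁ ℂ) ⊗ₖ matLog Q := by
  set U : Matrix k₁ k₁ ℂ := ↑hP.isHermitian.eigenvectorUnitary
  set V : Matrix k₂ k₂ ℂ := ↑hQ.isHermitian.eigenvectorUnitary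
  set a := hP.isHermitian.eigenvalues
  set b := hQ.isHermitian.eigenvalues
  have hU : U ∈ unitary (Matrix k₁ k₁ ℂ) := hP.isHermitian.eigenvectorUnitary.2
  have hV : V ∈ unitary (Matrix k₂ k₂ ℂ) := hQ.isHermitian.eigenvectorUnitary.2
  have hstar : star (U ⊗ₖ V) = star U ⊗ₖ star V := by
    simp only [star_eq_conjTranspose, conjTranspose_kronecker]
  have hPQ : P ⊗ₖ Q =
      (U ⊗ₖ V) * diagonal (fun p : k₁ × k₂ => ((a p.1 * b p.2 : ℝ) : ℂ)) * star (U ⊗ₖ V) := by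
    push_cast
    rw [hstar, ← diagonal_kronecker_diagonal (fun i => (a i : ℂ)) (fun j => (b j : ℂ)),
      ← mul_kronecker_mul, ← mul_kronecker_mul]
    exact congrArg₂ _ hP.isHermitian.spectral_theorem hQ.isHermitian.spectral_theorem
  have hlog : diagonal (fun p : k₁ × k₂ => (Real.log (a p.1 * b p.2) : ℂ)) =
      diagonal (fun i => (Real.log (a i) : ℂ)) ⊗ₖ diagonal (fun _ => 1) +
        diagonal (fun _ => 1) ⊗ₖ diagonal (fun j => (Real.log (b j) : ℂ)) := by
    rw [diagonal_kronecker_diagonal, diagonal_kronecker_diagonal, diagonal_add]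
    congr 1
    funext p
    rw [Real.log_mul (hP.eigenvalues_pos p.1).ne' (hQ.eigenvalues_pos p.2).ne']
    push_cast
    ring
  rw [matLog, hPQ, hermCalc_conj_diagonal _ (kronecker_mem_unitary hU hV), hlog,
    diagonal_one, diagonal_one, matLog, matLog, hermCalc_of_isHermitian hP.isHermitian,
    hermCalc_of_isHermitian hQ.isHermitian, mul_add, add_mul, hstar]
  simp only [← mul_kronecker_mul, mul_one, Unitary.mul_star_self_of_mem hU,
    Unitary.mul_star_self_of_mem hV]
  rfl

lemma trace_mul_kronecker_one [Fintype k₁] [Fintype k₂] [DecidableEq k₂]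
    (D : Matrix (k₁ × k₂) (k₁ × k₂) ℂ) (X : Matrix k₁ k₁ ℂ) :
    (D * (X ⊗ₖ (1 : Matrix k₂ k₂ ℂ))).trace = (ptraceR D * X).trace := by
  simp only [trace, diag_apply, mul_apply, ptraceR, of_apply, kroneckerMap_apply, one_apply,
    mul_ite, mul_one, mul_zero, Fintype.sum_prod_type, Finset.sum_mul, Finset.sum_ite_eq',
    Finset.mem_univ, if_true]
  exact Finset.sum_congr rfl fun i _ => Finset.sum_comm

lemma trace_mul_one_kronecker [Fintype k₁] [Fintype k₂] [DecidableEq k₁]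
    (D : Matrix (k₁ × k₂) (k₁ × k₂) ℂ) (Y : Matrix k₂ k₂ ℂ) :
    (D * ((1 : Matrix k₁ k₁ ℂ) ⊗ₖ Y)).trace = (ptraceL D * Y).trace := by
  rw [trace_mul_comm]
  simp only [trace, diag_apply, mul_apply, ptraceL, of_apply, kroneckerMap_apply, one_apply,
    ite_mul, one_mul, zero_mul, Fintype.sum_prod_type, Finset.sum_mul, Finset.sum_ite_irrel,
    Finset.sum_const_zero, Finset.sum_ite_eq, Finset.mem_univ, if_true]
  simp only [Finset.sum_comm (γ := k₁), mul_comm]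
  exact Finset.sum_comm

lemma isHermitian_ptraceR [Fintype k₂] {D : Matrix (k₁ × k₂) (k₁ × k₂) ℂ}
    (hD : D.IsHermitian) : (ptraceR D).IsHermitian := by
  ext i j
  simp only [conjTranspose_apply, ptraceR, of_apply, star_sum]
  exact Finset.sum_congr rfl fun s _ => hD.apply (i, s) (j, s)

lemma isHermitian_ptraceL [Fintype k₁] {D : Matrix (k₁ × k₂) (k₁ × k₂) ℂ}
    (hD : D.IsHermitian) : (ptraceL D).IsHermitian := by
  ext i j
  simp only [conjTranspose_apply, ptraceL, of_apply, star_sum]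
  exact Finset.sum_congr rfl fun s _ => hD.apply (s, i) (s, j)

end TensorProduct

theorem donald_formula_general {m n : ℕ}
    (ϖ : Matrix (Fin m × Fin n) (Fin m × Fin n) ℂ)
    (hϖ : ϖ.PosDef)
    (σL : Matrix (Fin m) (Fin m) ℂ) (hσL : σL.PosDef)
    (σR : Matrix (Fin n) (Fin n) ℂ) (hσR : σR.PosDef) :
    relEntropy ϖ (σL ⊗ₖ σR) =
      mutualEntropy ϖ + relEntropy (ptraceR ϖ) σL + relEntropy (ptraceL ϖ) σR := by
  have hϖh : ϖ.IsHermitian := hϖ.isHermitian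
  rw [relEntropy_eq_neg_vnEntropy_sub hϖh,
    relEntropy_eq_neg_vnEntropy_sub (isHermitian_ptraceR hϖh),
    relEntropy_eq_neg_vnEntropy_sub (isHermitian_ptraceL hϖh), matLog_kronecker hσL hσR,
    mul_add, trace_add, Complex.add_re, trace_mul_kronecker_one, trace_mul_one_kronecker,
    mutualEntropy]
  ring

/-- Donald's formula. -/
theorem donald_formula {m n : ℕ}
    (ϖ : Matrix (Fin m × Fin n) (Fin m × Fin n) ℂ)
    (hϖ : ϖ.PosDef) (hϖtr : ϖ.trace = 1)
    (σL : Matrix (Fin m) (Fin m) ℂ) (hσL : σL.PosDef) (hσLtr : σL.trace = 1)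
    (σR : Matrix (Fin n) (Fin n) ℂ) (hσR : σR.PosDef) (hσRtr : σR.trace = 1) :
    relEntropy ϖ (σL ⊗ₖ σR) =
      mutualEntropy ϖ + relEntropy (ptraceR ϖ) σL + relEntropy (ptraceL ϖ) σR :=
  donald_formula_general ϖ hϖ σL hσL σR hσR

end TAL
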